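/- arXiv:2305.16173 — 2 statements merged into one kernel-verified Lean document; each statement's English description precedes it below -/
import Mathlib

section
/- For any complex matrix G of size p×q, the squared Frobenius norm of the t-th Gram iterate equals the sum of the 2^t powers of the singular values of G; that is, ‖G^(t)‖_F² = Σᵢ σᵢ(G)^{2^t}. -/
open Matrix Filter Topology

noncomputable def frobNorm {m n : Type*} [Fintype m] [Fintype n] (G : Matrix m n ℂ) : ℝ :=
  Real.sqrt (∑ i, ∑ j, ‖G i j‖ ^ 2)

noncomputable def singVals {m n : Type*} [Fintype m] [Fintype n] [DecidableEq n]
    (G : Matrix m n ℂ) : n → ℝ :=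
  fun i => Real.sqrt ((Matrix.isHermitian_conjTranspose_mul_self G).eigenvalues i)

noncomputable def specNorm {m n : Type*} [Fintype m] [Fintype n] [DecidableEq n]
    (G : Matrix m n ℂ) : ℝ :=
  ⨆ i, singVals G i

/-- `gramIter G t` is the Gram iterate `G⁽ᵗ⁺²⁾` of the sequence `G⁽¹⁾ = G`,
`G⁽ᵗ⁺¹⁾ = (G⁽ᵗ⁾)ᴴ G⁽ᵗ⁾`.  (The first iterate `G⁽¹⁾ = G` is kept separate since it has a
different shape.) -/
noncomputable def gramIter {m n : Type*} [Fintype m] [Fintype n] (G : Matrix m n ℂ) :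
    ℕ → Matrix n n ℂ
  | 0 => Gᴴ * G
  | t + 1 => (gramIter G t)ᴴ * gramIter G t

/-- `gramBound G t` is the bound `‖G⁽ᵗ⁺¹⁾‖_F ^ (2^(1-(t+1)))` of the paper (paper index
`t+1 ≥ 1`). -/
noncomputable def gramBound {m n : Type*} [Fintype m] [Fintype n] (G : Matrix m n ℂ) : ℕ → ℝ
  | 0 => frobNorm G
  | t + 1 => frobNorm (gramIter G t) ^ ((2 : ℝ) ^ (-(t + 1 : ℤ)))


private lemma frobSq_eq_re_trace' {m n : Type*} [Fintype m] [Fintype n] (M : Matrix m n ℂ) :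
    (∑ i, ∑ j, ‖M i j‖ ^ 2) = (Mᴴ * M).trace.re := by
  rw [Matrix.trace, Complex.re_sum, Finset.sum_comm]
  refine Finset.sum_congr rfl fun j _ => ?_
  simp only [Matrix.diag_apply, Matrix.mul_apply, Complex.re_sum, Matrix.conjTranspose_apply]
  refine Finset.sum_congr rfl fun i _ => ?_
  rw [Complex.star_def, ← Complex.normSq_eq_conj_mul_self, Complex.normSq_eq_norm_sq]
  simp [← Complex.ofReal_pow]

private lemma trace_pow_herm' {n : Type*} [Fintype n] [DecidableEq n] {A : Matrix n n ℂ}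
    (hA : A.IsHermitian) (k : ℕ) :
    (A ^ k).trace = ∑ i, (hA.eigenvalues i : ℂ) ^ k := by
  set U : Matrix n n ℂ := (hA.eigenvectorUnitary : Matrix n n ℂ) with hUdef
  have hU : star U * U = 1 := by simpa [hUdef] using hA.eigenvectorUnitary.prop.1
  have key : ∀ B C : Matrix n n ℂ, (U * B * star U) * (U * C * star U)
      = U * (B * C) * star U := by
    intro B C
    simp only [Matrix.mul_assoc, ← Matrix.mul_assoc (star U) U, hU, Matrix.one_mul]
  have hU2 : U * star U = 1 := by simpa [hUdef] using hA.eigenvectorUnitary.prop.2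
  have hspec : A = U * diagonal (RCLike.ofReal ∘ hA.eigenvalues) * star U := hA.spectral_theorem
  have hpow : A ^ k = U * (diagonal (RCLike.ofReal ∘ hA.eigenvalues)) ^ k * star U := by
    induction k with
    | zero => simp [hU2]
    | succ k ih =>
      rw [pow_succ, ih, pow_succ, ← key, ← hspec]
  rw [hpow, Matrix.trace_mul_cycle, hU, Matrix.one_mul,
    Matrix.diagonal_pow, Matrix.trace_diagonal]
  simp

private lemma gramIter_eq_pow' {m n : Type*} [Fintype m] [Fintype n] [DecidableEq n]
    (G : Matrix m n ℂ) (t : ℕ) : gramIter G t = (Gᴴ * G) ^ (2 ^ t) := by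
  induction t with
  | zero => simp [gramIter]
  | succ t ih =>
    rw [gramIter, ih, Matrix.conjTranspose_pow,
      (Matrix.isHermitian_conjTranspose_mul_self G).eq, ← pow_add]; ring_nf

/-- For any complex matrix `G`, for every `t ≥ 1` the squared Frobenius norm of the `t`-th
Gram iterate equals the sum of the `2^t`-th powers of the singular values of `G`.
The first conjunct is the case `t = 1` (where `G⁽¹⁾ = G`), the second handles `t ≥ 2`
(`gramIter G t = G⁽ᵗ⁺²⁾`). -/
theorem frobSq_gramIter_eq_sum_pow_singVals {p q : ℕ} (G : Matrix (Fin p) (Fin q) ℂ) :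
    (frobNorm G ^ 2 = ∑ i, singVals G i ^ 2) ∧
    (∀ t : ℕ, frobNorm (gramIter G t) ^ 2 = ∑ i, singVals G i ^ (2 ^ (t + 2))) := by

  simp only [frobNorm, singVals]
  have hA := Matrix.isHermitian_conjTranspose_mul_self G
  have hnn : ∀ i, 0 ≤ hA.eigenvalues i := eigenvalues_conjTranspose_mul_self_nonneg G
  have frob : ∀ {k : Type} [Fintype k] (M : Matrix k (Fin q) ℂ),
      Real.sqrt (∑ i, ∑ j, ‖M i j‖ ^ 2) ^ 2 = (Mᴴ * M).trace.re := by
    intro k _ M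
    rw [Real.sq_sqrt (by positivity), frobSq_eq_re_trace']
  constructor
  · have ht : (Gᴴ * G).trace = ∑ i, (hA.eigenvalues i : ℂ) := by
      simpa using trace_pow_herm' hA 1
    rw [frob G, ht, Complex.re_sum]
    refine Finset.sum_congr rfl fun i _ => ?_
    rw [Real.sq_sqrt (hnn i)]
    simp
  · intro t
    have ht : ((gramIter G t)ᴴ * gramIter G t).trace
        = ∑ i, (hA.eigenvalues i : ℂ) ^ (2 ^ (t + 1)) := by
      rw [show (gramIter G t)ᴴ * gramIter G t = gramIter G (t + 1) from rfl, gramIter_eq_pow']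
      exact trace_pow_herm' hA _
    rw [frob (gramIter G t), ht, Complex.re_sum]
    refine Finset.sum_congr rfl fun i _ => ?_
    rw [show t + 2 = (t + 1) + 1 by ring, pow_succ (2 : ℕ) (t + 1), mul_comm, pow_mul,
      Real.sq_sqrt (hnn i)]
    simp [← Complex.ofReal_pow]
end

section
/- Let W be the matrix of a multi-channel circular convolution with block-diagonalization blocks D₁,…,D_{n²}. Then for every t ≥ 1, σ₁(W) ≤ max_{1 ≤ i ≤ n²} ‖Dᵢ^(t)‖_F^{2^{1-t}}, and the right-hand side converges to σ₁(W) as t → ∞. -/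
open Matrix Filter Topology

set_option linter.unusedSectionVars false
set_option linter.unusedVariables false

open scoped Matrix.Norms.L2Operator

namespace GramAux

variable {m n : Type*} [Fintype m] [Fintype n] [DecidableEq m] [DecidableEq n]

lemma frobNorm_def (G : Matrix m n ℂ) : frobNorm G = Real.sqrt (∑ i, ∑ j, ‖G i j‖ ^ 2) := rfl

lemma opNorm_le_bound (A : Matrix m n ℂ) {c : ℝ} (hc : 0 ≤ c)
    (h : ∀ x : EuclideanSpace ℂ n, ‖toEuclideanLin A x‖ ≤ c * ‖x‖) : ‖A‖ ≤ c := by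
  rw [Matrix.l2_opNorm_def]
  exact ContinuousLinearMap.opNorm_le_bound _ hc h

lemma le_opNorm (A : Matrix m n ℂ) (x : EuclideanSpace ℂ n) :
    ‖toEuclideanLin A x‖ ≤ ‖A‖ * ‖x‖ := A.l2_opNorm_mulVec x

lemma norm_sq_eq (x : EuclideanSpace ℂ n) : ‖x‖ ^ 2 = ∑ i, ‖x i‖ ^ 2 := by
  rw [EuclideanSpace.norm_eq, Real.sq_sqrt (by positivity)]

lemma le_of_sq_le_sq {a b : ℝ} (ha : 0 ≤ a) (hb : 0 ≤ b) (h : a ^ 2 ≤ b ^ 2) : a ≤ b := by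
  nlinarith

lemma norm_one_le : ‖(1 : Matrix m m ℂ)‖ ≤ 1 := by
  apply opNorm_le_bound _ zero_le_one
  intro x
  have : toEuclideanLin (1 : Matrix m m ℂ) x = x := by
    apply PiLp.ext
    intro i
    show (1 : Matrix m m ℂ).mulVec x i = x i
    rw [Matrix.one_mulVec]
  rw [this, one_mul]

lemma unitary_norm_le {U : Matrix m m ℂ} (hU : U ∈ Matrix.unitaryGroup m ℂ) : ‖U‖ ≤ 1 := by
  have h1 : Uᴴ * U = 1 := by
    rw [← Matrix.star_eq_conjTranspose]
    exact hU.1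
  have h2 : ‖U‖ * ‖U‖ ≤ 1 := by
    rw [← Matrix.l2_opNorm_conjTranspose_mul_self, h1]
    exact norm_one_le
  nlinarith [norm_nonneg U, h2]

lemma unitary_mul_norm {U : Matrix m m ℂ} (hU : U ∈ Matrix.unitaryGroup m ℂ)
    (M : Matrix m n ℂ) : ‖U * M‖ = ‖M‖ := by
  refine le_antisymm ?_ ?_
  · calc ‖U * M‖ ≤ ‖U‖ * ‖M‖ := Matrix.l2_opNorm_mul U M
    _ ≤ 1 * ‖M‖ := mul_le_mul_of_nonneg_right (unitary_norm_le hU) (norm_nonneg M)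
    _ = ‖M‖ := one_mul _
  · have hm : M = Uᴴ * (U * M) := by
      rw [← Matrix.mul_assoc, ← Matrix.star_eq_conjTranspose, hU.1, Matrix.one_mul]
    have hUH : ‖Uᴴ‖ ≤ 1 := by
      rw [Matrix.l2_opNorm_conjTranspose]; exact unitary_norm_le hU
    calc ‖M‖ = ‖Uᴴ * (U * M)‖ := by rw [← hm]
    _ ≤ ‖Uᴴ‖ * ‖U * M‖ := Matrix.l2_opNorm_mul _ _
    _ ≤ 1 * ‖U * M‖ := mul_le_mul_of_nonneg_right hUH (norm_nonneg _)
    _ = ‖U * M‖ := one_mul _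

lemma norm_mul_unitary {V : Matrix n n ℂ} (hV : V ∈ Matrix.unitaryGroup n ℂ)
    (M : Matrix m n ℂ) : ‖M * V‖ = ‖M‖ := by
  refine le_antisymm ?_ ?_
  · calc ‖M * V‖ ≤ ‖M‖ * ‖V‖ := Matrix.l2_opNorm_mul M V
    _ ≤ ‖M‖ * 1 := mul_le_mul_of_nonneg_left (unitary_norm_le hV) (norm_nonneg M)
    _ = ‖M‖ := mul_one _
  · have hm : M = (M * V) * Vᴴ := by
      rw [Matrix.mul_assoc, ← Matrix.star_eq_conjTranspose, hV.2, Matrix.mul_one]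
    have hVH : ‖Vᴴ‖ ≤ 1 := by
      rw [Matrix.l2_opNorm_conjTranspose]; exact unitary_norm_le hV
    calc ‖M‖ = ‖(M * V) * Vᴴ‖ := by rw [← hm]
    _ ≤ ‖M * V‖ * ‖Vᴴ‖ := Matrix.l2_opNorm_mul _ _
    _ ≤ ‖M * V‖ * 1 := mul_le_mul_of_nonneg_left hVH (norm_nonneg _)
    _ = ‖M * V‖ := mul_one _


lemma mulVec_sq_le (A : Matrix m n ℂ) (y : n → ℂ) :
    ∑ i, ‖A.mulVec y i‖ ^ 2 ≤ ‖A‖ ^ 2 * ∑ j, ‖y j‖ ^ 2 := by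
  have h := le_opNorm A ((WithLp.equiv 2 (n → ℂ)).symm y)
  have h2 : ‖toEuclideanLin A ((WithLp.equiv 2 (n → ℂ)).symm y)‖ ^ 2
      = ∑ i, ‖A.mulVec y i‖ ^ 2 := by
    rw [norm_sq_eq]; rfl
  have h3 : ‖((WithLp.equiv 2 (n → ℂ)).symm y : EuclideanSpace ℂ n)‖ ^ 2 = ∑ j, ‖y j‖ ^ 2 := by
    rw [norm_sq_eq]; rfl
  calc ∑ i, ‖A.mulVec y i‖ ^ 2 = ‖toEuclideanLin A ((WithLp.equiv 2 (n → ℂ)).symm y)‖ ^ 2 :=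
        h2.symm
    _ ≤ (‖A‖ * ‖((WithLp.equiv 2 (n → ℂ)).symm y : EuclideanSpace ℂ n)‖) ^ 2 := by
        apply pow_le_pow_left₀ (norm_nonneg _) h
    _ = ‖A‖ ^ 2 * ∑ j, ‖y j‖ ^ 2 := by rw [mul_pow, h3]

lemma opNorm_diagonal (d : n → ℂ) : ‖(Matrix.diagonal d)‖ = ⨆ i, ‖d i‖ := by
  cases isEmpty_or_nonempty n with
  | inl h =>
    rw [Real.iSup_of_isEmpty]
    have : Matrix.diagonal d = 0 := Subsingleton.elim _ _
    rw [this, norm_zero]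
  | inr h =>
    have hbdd : BddAbove (Set.range fun i => ‖d i‖) := Set.Finite.bddAbove (Set.finite_range _)
    have hc : 0 ≤ ⨆ i, ‖d i‖ :=
      le_trans (norm_nonneg (d (Classical.arbitrary n))) (le_ciSup hbdd _)
    refine le_antisymm ?_ ?_
    · apply opNorm_le_bound _ hc
      intro x
      apply le_of_sq_le_sq (norm_nonneg _) (by positivity)
      rw [norm_sq_eq, mul_pow, norm_sq_eq, Finset.mul_sum]
      apply Finset.sum_le_sum
      intro i _
      have hx : toEuclideanLin (Matrix.diagonal d) x i = d i * x i := by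
        show (Matrix.diagonal d).mulVec x i = _
        rw [Matrix.mulVec_diagonal]
      rw [hx, norm_mul, mul_pow]
      apply mul_le_mul_of_nonneg_right _ (by positivity)
      apply pow_le_pow_left₀ (norm_nonneg _) (le_ciSup hbdd i)
    · apply ciSup_le
      intro i
      have h := le_opNorm (Matrix.diagonal d) (EuclideanSpace.single i 1)
      have hx : ‖(EuclideanSpace.single i (1:ℂ) : EuclideanSpace ℂ n)‖ = 1 := by
        rw [EuclideanSpace.norm_single, norm_one]
      have hv : ‖toEuclideanLin (Matrix.diagonal d) (EuclideanSpace.single i 1)‖ = ‖d i‖ := by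
        have : toEuclideanLin (Matrix.diagonal d) (EuclideanSpace.single i 1)
            = EuclideanSpace.single i (d i) := by
          apply PiLp.ext
          intro j
          show (Matrix.diagonal d).mulVec (EuclideanSpace.single i 1) j
            = EuclideanSpace.single i (d i) j
          rw [Matrix.mulVec_diagonal]
          simp [EuclideanSpace.single_apply]
          rcases eq_or_ne j i with rfl | hji
          · simp
          · simp [hji]
        rw [this, EuclideanSpace.norm_single]
      rw [hv, hx, mul_one] at h
      exact h


lemma specNorm_eq_norm (G : Matrix m n ℂ) : specNorm G = ‖G‖ := by
  cases isEmpty_or_nonempty n with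
  | inl h =>
    rw [show specNorm G = ⨆ i, singVals G i from rfl, Real.iSup_of_isEmpty]
    have : G = 0 := Subsingleton.elim _ _
    rw [this, norm_zero]
  | inr h =>
    have hA : (Gᴴ * G).IsHermitian := Matrix.isHermitian_conjTranspose_mul_self G
    have hnn : ∀ i, 0 ≤ hA.eigenvalues i := fun i =>
      Matrix.eigenvalues_conjTranspose_mul_self_nonneg G i
    have hstar : (star (hA.eigenvectorUnitary : Matrix n n ℂ)) ∈ Matrix.unitaryGroup n ℂ :=
      Unitary.star_mem hA.eigenvectorUnitary.2
    have hnorm : ‖Gᴴ * G‖ = ⨆ i, hA.eigenvalues i := by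
      conv_lhs => rw [hA.spectral_theorem, Unitary.conjStarAlgAut_apply]
      rw [norm_mul_unitary hstar, unitary_mul_norm hA.eigenvectorUnitary.2, opNorm_diagonal]
      congr 1
      funext i
      simp only [Function.comp_apply, RCLike.norm_ofReal]
      exact abs_of_nonneg (hnn i)
    have hsq : Real.sqrt (⨆ i, hA.eigenvalues i) = ⨆ i, Real.sqrt (hA.eigenvalues i) :=
      Monotone.map_ciSup_of_continuousAt Real.continuous_sqrt.continuousAt
        (fun a b hab => Real.sqrt_le_sqrt hab)
        (Set.Finite.bddAbove (Set.finite_range _))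
    calc specNorm G = ⨆ i, Real.sqrt (hA.eigenvalues i) := rfl
      _ = Real.sqrt (⨆ i, hA.eigenvalues i) := hsq.symm
      _ = Real.sqrt (‖Gᴴ * G‖) := by rw [hnorm]
      _ = Real.sqrt (‖G‖ * ‖G‖) := by rw [Matrix.l2_opNorm_conjTranspose_mul_self]
      _ = ‖G‖ := Real.sqrt_mul_self (norm_nonneg _)


lemma norm_le_frobNorm (G : Matrix m n ℂ) : ‖G‖ ≤ frobNorm G := by
  apply opNorm_le_bound _ (Real.sqrt_nonneg _)
  intro x
  apply le_of_sq_le_sq (norm_nonneg _) (by positivity)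
  rw [norm_sq_eq, mul_pow, norm_sq_eq,
    Real.sq_sqrt (by positivity : (0:ℝ) ≤ ∑ i, ∑ j, ‖G i j‖ ^ 2), Finset.sum_mul]
  apply Finset.sum_le_sum
  intro i _
  have hGi : toEuclideanLin G x i = ∑ j, G i j * x j := by
    show G.mulVec x i = _
    rw [Matrix.mulVec, dotProduct]
  rw [hGi]
  calc ‖∑ j, G i j * x j‖ ^ 2 ≤ (∑ j, ‖G i j‖ * ‖x j‖) ^ 2 := by
        apply pow_le_pow_left₀ (norm_nonneg _)
        refine (norm_sum_le _ _).trans (le_of_eq ?_)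
        apply Finset.sum_congr rfl
        intro j _
        rw [norm_mul]
    _ ≤ (∑ j, ‖G i j‖ ^ 2) * ∑ j, ‖x j‖ ^ 2 :=
        Finset.sum_mul_sq_le_sq_mul_sq _ _ _

lemma frobNorm_le (G : Matrix m n ℂ) :
    frobNorm G ≤ Real.sqrt (Fintype.card n) * ‖G‖ := by
  have hcol : ∀ j i, G.mulVec (Pi.single j 1) i = G i j := by
    intro j i
    rw [Matrix.mulVec_single]
    exact mul_one _
  have hone : ∀ j : n, ∑ b, ‖(Pi.single j 1 : n → ℂ) b‖ ^ 2 = 1 := by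
    intro j
    simp [Pi.single_apply, apply_ite (‖·‖), Finset.sum_ite_eq']
  have key : ∑ i, ∑ j, ‖G i j‖ ^ 2 ≤ (Fintype.card n : ℝ) * ‖G‖ ^ 2 := by
    rw [Finset.sum_comm]
    have h1 : ∀ j : n, ∑ i, ‖G i j‖ ^ 2 ≤ ‖G‖ ^ 2 := by
      intro j
      have := mulVec_sq_le G (Pi.single j 1)
      rw [hone j, mul_one] at this
      refine le_trans (le_of_eq ?_) this
      exact Finset.sum_congr rfl fun i _ => by rw [hcol j i]
    calc ∑ j : n, ∑ i, ‖G i j‖ ^ 2 ≤ ∑ _j : n, ‖G‖ ^ 2 := Finset.sum_le_sum fun j _ => h1 j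
      _ = (Fintype.card n : ℝ) * ‖G‖ ^ 2 := by
        rw [Finset.sum_const, Finset.card_univ, nsmul_eq_mul]
  rw [frobNorm_def]
  apply le_of_sq_le_sq (Real.sqrt_nonneg _) (by positivity)
  rw [Real.sq_sqrt (by positivity : (0:ℝ) ≤ ∑ i, ∑ j, ‖G i j‖ ^ 2), mul_pow,
    Real.sq_sqrt (Nat.cast_nonneg _)]
  exact key


lemma frobNorm_nonneg (G : Matrix m n ℂ) : 0 ≤ frobNorm G := Real.sqrt_nonneg _

lemma gramIter_norm (G : Matrix m n ℂ) (t : ℕ) : ‖gramIter G t‖ = ‖G‖ ^ (2 ^ (t + 1)) := by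
  induction t with
  | zero =>
    show ‖Gᴴ * G‖ = ‖G‖ ^ (2 ^ 1)
    rw [Matrix.l2_opNorm_conjTranspose_mul_self]
    ring
  | succ t ih =>
    show ‖(gramIter G t)ᴴ * gramIter G t‖ = ‖G‖ ^ (2 ^ (t + 2))
    rw [Matrix.l2_opNorm_conjTranspose_mul_self, ih, ← pow_add]
    congr 1
    rw [pow_succ 2 (t + 1), mul_two]

lemma pow_gram_exp (a : ℝ) (ha : 0 ≤ a) (t : ℕ) :
    (a ^ (2 ^ (t + 1))) ^ ((2 : ℝ) ^ (-(t + 1 : ℤ))) = a := by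
  rw [← Real.rpow_natCast a (2 ^ (t + 1)), ← Real.rpow_mul ha]
  have hcast : ((2 ^ (t + 1) : ℕ) : ℝ) = (2 : ℝ) ^ ((t + 1 : ℕ) : ℤ) := by
    rw [zpow_natCast]
    push_cast
    ring
  rw [hcast, ← zpow_add₀ (two_ne_zero (α := ℝ))]
  have : ((t + 1 : ℕ) : ℤ) + -(t + 1 : ℤ) = 0 := by push_cast; ring
  rw [this, zpow_zero, Real.rpow_one]

lemma gramBound_ge (G : Matrix m n ℂ) (t : ℕ) : ‖G‖ ≤ gramBound G t := by
  cases t with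
  | zero => exact norm_le_frobNorm G
  | succ t =>
    show ‖G‖ ≤ frobNorm (gramIter G t) ^ ((2 : ℝ) ^ (-(t + 1 : ℤ)))
    have h1 : ‖gramIter G t‖ ≤ frobNorm (gramIter G t) := norm_le_frobNorm _
    have hexp : (0 : ℝ) ≤ (2 : ℝ) ^ (-(t + 1 : ℤ)) := le_of_lt (zpow_pos two_pos _)
    have h2 := Real.rpow_le_rpow (norm_nonneg _) h1 hexp
    rw [gramIter_norm, pow_gram_exp ‖G‖ (norm_nonneg G) t] at h2
    exact h2

lemma gramBound_le (G : Matrix m n ℂ) (t : ℕ) :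
    gramBound G t ≤ (max 1 (Real.sqrt (Fintype.card n))) ^ ((2 : ℝ) ^ (-(t : ℤ))) * ‖G‖ := by
  set c := max 1 (Real.sqrt (Fintype.card n)) with hc
  have hc1 : (1 : ℝ) ≤ c := le_max_left _ _
  have hc0 : (0 : ℝ) ≤ c := by linarith
  cases t with
  | zero =>
    show frobNorm G ≤ c ^ ((2 : ℝ) ^ (-(0 : ℕ) : ℤ)) * ‖G‖
    have h0 : ((2 : ℝ) ^ (-(0 : ℕ) : ℤ)) = 1 := by norm_num
    rw [h0, Real.rpow_one]
    exact (frobNorm_le G).trans (mul_le_mul_of_nonneg_right (le_max_right _ _) (norm_nonneg _))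
  | succ t =>
    have hcast : (-((t + 1 : ℕ) : ℤ)) = (-(t + 1 : ℤ)) := by push_cast; ring
    show frobNorm (gramIter G t) ^ ((2 : ℝ) ^ (-(t + 1 : ℤ)))
      ≤ c ^ ((2 : ℝ) ^ (-((t + 1 : ℕ) : ℤ))) * ‖G‖
    rw [hcast]
    have hexp : (0 : ℝ) ≤ (2 : ℝ) ^ (-(t + 1 : ℤ)) := le_of_lt (zpow_pos two_pos _)
    have h1' : frobNorm (gramIter G t) ≤ c * ‖gramIter G t‖ :=
      (frobNorm_le _).trans
        (mul_le_mul_of_nonneg_right (le_max_right _ _) (norm_nonneg _))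
    calc frobNorm (gramIter G t) ^ ((2 : ℝ) ^ (-(t + 1 : ℤ)))
        ≤ (c * ‖gramIter G t‖) ^ ((2 : ℝ) ^ (-(t + 1 : ℤ))) :=
          Real.rpow_le_rpow (frobNorm_nonneg _) h1' hexp
      _ = c ^ ((2 : ℝ) ^ (-(t + 1 : ℤ))) * ‖gramIter G t‖ ^ ((2 : ℝ) ^ (-(t + 1 : ℤ))) :=
          Real.mul_rpow hc0 (norm_nonneg _)
      _ = c ^ ((2 : ℝ) ^ (-(t + 1 : ℤ))) * ‖G‖ := by
          rw [gramIter_norm, pow_gram_exp _ (norm_nonneg _)]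


section Block

variable {ι p q : Type*} [Fintype ι] [DecidableEq ι] [Fintype p] [Fintype q]
  [DecidableEq p] [DecidableEq q]

lemma blockDiag_mulVec (D : ι → Matrix p q ℂ) (x : ι × q → ℂ) (i : ι) (a : p) :
    (Matrix.of fun (a : ι × p) (b : ι × q) =>
      if a.1 = b.1 then D a.1 a.2 b.2 else 0).mulVec x (i, a)
      = (D i).mulVec (fun b => x (i, b)) a := by
  show ∑ jb : ι × q, (if i = jb.1 then D i a jb.2 else 0) * x jb
      = ∑ b, D i a b * x (i, b)
  rw [Fintype.sum_prod_type]
  rw [Finset.sum_eq_single i (fun j _ hj => by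
      apply Finset.sum_eq_zero
      intro b _
      rw [if_neg (Ne.symm hj), zero_mul])
    (fun h => absurd (Finset.mem_univ i) h)]
  simp

lemma opNorm_blockDiag (D : ι → Matrix p q ℂ) :
    ‖(Matrix.of fun (a : ι × p) (b : ι × q) =>
      if a.1 = b.1 then D a.1 a.2 b.2 else 0)‖ = ⨆ i, ‖D i‖ := by
  set B : Matrix (ι × p) (ι × q) ℂ := Matrix.of fun (a : ι × p) (b : ι × q) =>
    if a.1 = b.1 then D a.1 a.2 b.2 else 0 with hB
  cases isEmpty_or_nonempty ι with
  | inl h =>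
    rw [Real.iSup_of_isEmpty]
    have : B = 0 := Subsingleton.elim _ _
    rw [this, norm_zero]
  | inr h =>
    have hbdd : BddAbove (Set.range fun i => ‖D i‖) := Set.Finite.bddAbove (Set.finite_range _)
    have hc0 : 0 ≤ ⨆ i, ‖D i‖ :=
      le_trans (norm_nonneg (D (Classical.arbitrary ι))) (le_ciSup hbdd _)
    refine le_antisymm ?_ ?_
    · apply opNorm_le_bound _ hc0
      intro x
      apply le_of_sq_le_sq (norm_nonneg _) (by positivity)
      rw [norm_sq_eq, mul_pow, norm_sq_eq, Fintype.sum_prod_type, Fintype.sum_prod_type,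
        Finset.mul_sum]
      apply Finset.sum_le_sum
      intro i _
      have hrow : ∀ a : p, toEuclideanLin B x (i, a) = (D i).mulVec (fun b => x (i, b)) a :=
        fun a => blockDiag_mulVec D x i a
      calc ∑ a, ‖toEuclideanLin B x (i, a)‖ ^ 2
          = ∑ a, ‖(D i).mulVec (fun b => x (i, b)) a‖ ^ 2 := by
            exact Finset.sum_congr rfl fun a _ => by rw [hrow a]
        _ ≤ ‖D i‖ ^ 2 * ∑ b, ‖x (i, b)‖ ^ 2 := mulVec_sq_le (D i) _
        _ ≤ (⨆ i, ‖D i‖) ^ 2 * ∑ b, ‖x (i, b)‖ ^ 2 := by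
            apply mul_le_mul_of_nonneg_right _ (by positivity)
            exact pow_le_pow_left₀ (norm_nonneg _) (le_ciSup hbdd i) 2
    · apply ciSup_le
      intro i
      apply opNorm_le_bound _ (norm_nonneg B)
      intro y
      set x : EuclideanSpace ℂ (ι × q) :=
        (WithLp.equiv 2 (ι × q → ℂ)).symm (fun jb => if jb.1 = i then y jb.2 else 0) with hx
      have hxnorm : ‖x‖ ^ 2 = ‖y‖ ^ 2 := by
        rw [norm_sq_eq, norm_sq_eq, Fintype.sum_prod_type]
        rw [Finset.sum_eq_single i (fun j _ hj => by
            apply Finset.sum_eq_zero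
            intro b _
            show ‖if j = i then y b else 0‖ ^ 2 = 0
            rw [if_neg hj, norm_zero]
            ring)
          (fun hmem => absurd (Finset.mem_univ i) hmem)]
        apply Finset.sum_congr rfl
        intro b _
        show ‖if i = i then y b else 0‖ ^ 2 = _
        rw [if_pos rfl]
      have hBx : ∀ ja : ι × p, toEuclideanLin B x ja
          = if ja.1 = i then (D i).mulVec (fun b => y b) ja.2 else 0 := by
        rintro ⟨j, a⟩
        have h0 : toEuclideanLin B x (j, a)
            = (D j).mulVec (fun b => if (j, b).1 = i then y (j, b).2 else 0) a :=
          blockDiag_mulVec D (fun jb => if jb.1 = i then y jb.2 else 0) j a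
        rw [h0]
        rcases eq_or_ne j i with rfl | hj
        · simp
        · rw [if_neg hj]
          have : (fun b => if (j, b).1 = i then y b else 0) = fun _ => (0 : ℂ) := by
            funext b; rw [if_neg hj]
          rw [this]
          show ∑ b, D j a b * (0:ℂ) = 0
          simp
      apply le_of_sq_le_sq (norm_nonneg _) (by positivity)
      have hDy : ‖toEuclideanLin (D i) y‖ ^ 2 = ‖toEuclideanLin B x‖ ^ 2 := by
        rw [norm_sq_eq, norm_sq_eq, Fintype.sum_prod_type]
        rw [Finset.sum_eq_single i (fun j _ hj => by
            apply Finset.sum_eq_zero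
            intro a _
            rw [hBx (j, a), if_neg hj, norm_zero]
            ring)
          (fun hmem => absurd (Finset.mem_univ i) hmem)]
        apply Finset.sum_congr rfl
        intro a _
        rw [hBx (i, a), if_pos rfl]
        rfl
      calc ‖toEuclideanLin (D i) y‖ ^ 2 = ‖toEuclideanLin B x‖ ^ 2 := hDy
        _ ≤ (‖B‖ * ‖x‖) ^ 2 := pow_le_pow_left₀ (norm_nonneg _) (le_opNorm B x) 2
        _ = ‖B‖ ^ 2 * ‖x‖ ^ 2 := mul_pow _ _ 2
        _ = ‖B‖ ^ 2 * ‖y‖ ^ 2 := by rw [hxnorm]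
        _ = (‖B‖ * ‖y‖) ^ 2 := (mul_pow _ _ 2).symm

end Block

end GramAux

/-- Let `W` be unitarily block-diagonalizable, `W = V₁ D V₂` with `D` block diagonal with
`n²` blocks `Dᵢ` of size `c_out × c_in` (the Trockman–Kolter block diagonalization of a
multi-channel circular convolution).  Then for every `t ≥ 1` (paper index `t+1` here),
`σ₁(W) ≤ maxᵢ ‖Dᵢ⁽ᵗ⁾‖_F^(2^(1-t))`, and the right-hand side converges to `σ₁(W)` as
`t → ∞`. -/
theorem specNorm_conv_le_max_gramBound {n cout cin : ℕ}
    (D : Fin (n ^ 2) → Matrix (Fin cout) (Fin cin) ℂ)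
    (V₁ : Matrix (Fin (n ^ 2) × Fin cout) (Fin (n ^ 2) × Fin cout) ℂ)
    (V₂ : Matrix (Fin (n ^ 2) × Fin cin) (Fin (n ^ 2) × Fin cin) ℂ)
    (hV₁ : V₁ ∈ Matrix.unitaryGroup (Fin (n ^ 2) × Fin cout) ℂ)
    (hV₂ : V₂ ∈ Matrix.unitaryGroup (Fin (n ^ 2) × Fin cin) ℂ)
    (W : Matrix (Fin (n ^ 2) × Fin cout) (Fin (n ^ 2) × Fin cin) ℂ)
    (hW : W = V₁ *
      (Matrix.of fun (a : Fin (n ^ 2) × Fin cout) (b : Fin (n ^ 2) × Fin cin) =>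
        if a.1 = b.1 then D a.1 a.2 b.2 else 0) * V₂) :
    (∀ t : ℕ, specNorm W ≤ ⨆ i, gramBound (D i) t) ∧
    Tendsto (fun t : ℕ => ⨆ i, gramBound (D i) t) atTop (𝓝 (specNorm W)) := by
  classical
  have hspec : specNorm W = ⨆ i, ‖D i‖ := by
    rw [GramAux.specNorm_eq_norm, hW, GramAux.norm_mul_unitary hV₂,
      GramAux.unitary_mul_norm hV₁, GramAux.opNorm_blockDiag]
  cases isEmpty_or_nonempty (Fin (n ^ 2)) with
  | inl h =>
    have h0 : specNorm W = 0 := by rw [hspec, Real.iSup_of_isEmpty]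
    constructor
    · intro t
      rw [h0, Real.iSup_of_isEmpty]
    · have hf : (fun t : ℕ => ⨆ i, gramBound (D i) t) = fun _ => (0 : ℝ) := by
        funext t
        rw [Real.iSup_of_isEmpty]
      rw [hf, h0]
      exact tendsto_const_nhds
  | inr h =>
    have hbddD : BddAbove (Set.range fun i => ‖D i‖) :=
      Set.Finite.bddAbove (Set.finite_range _)
    have hσ0 : 0 ≤ ⨆ i, ‖D i‖ :=
      le_trans (norm_nonneg (D (Classical.arbitrary _))) (le_ciSup hbddD _)
    have hge : ∀ t, specNorm W ≤ ⨆ i, gramBound (D i) t := by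
      intro t
      rw [hspec]
      exact ciSup_mono (Set.Finite.bddAbove (Set.finite_range _))
        (fun i => GramAux.gramBound_ge (D i) t)
    refine ⟨hge, ?_⟩
    set c := max 1 (Real.sqrt (Fintype.card (Fin cin))) with hcdef
    have hc1 : (1 : ℝ) ≤ c := le_max_left _ _
    have hc0 : (0 : ℝ) < c := lt_of_lt_of_le one_pos hc1
    have hle : ∀ t : ℕ, (⨆ i, gramBound (D i) t) ≤ c ^ ((2 : ℝ) ^ (-(t : ℤ))) * ⨆ i, ‖D i‖ := by
      intro t
      apply ciSup_le
      intro i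
      calc gramBound (D i) t ≤ c ^ ((2 : ℝ) ^ (-(t : ℤ))) * ‖D i‖ :=
            GramAux.gramBound_le (D i) t
        _ ≤ c ^ ((2 : ℝ) ^ (-(t : ℤ))) * ⨆ i, ‖D i‖ :=
            mul_le_mul_of_nonneg_left (le_ciSup hbddD i) (Real.rpow_nonneg hc0.le _)
    have hεt : Tendsto (fun t : ℕ => (2 : ℝ) ^ (-(t : ℤ))) atTop (𝓝 0) := by
      have heq : (fun t : ℕ => (2 : ℝ) ^ (-(t : ℤ))) = fun t : ℕ => (1 / 2 : ℝ) ^ t := by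
        funext t
        rw [_root_.zpow_neg, zpow_natCast, one_div, inv_pow]
      rw [heq]
      exact tendsto_pow_atTop_nhds_zero_of_lt_one (by norm_num) (by norm_num)
    have hcup : Tendsto (fun t : ℕ => c ^ ((2 : ℝ) ^ (-(t : ℤ)))) atTop (𝓝 1) := by
      have hcont : ContinuousAt (fun e : ℝ => c ^ e) 0 :=
        Real.continuousAt_const_rpow (ne_of_gt hc0)
      have := hcont.tendsto.comp hεt
      rw [Real.rpow_zero] at this
      exact this
    have hupper : Tendsto (fun t : ℕ => c ^ ((2 : ℝ) ^ (-(t : ℤ))) * ⨆ i, ‖D i‖) atTop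
        (𝓝 (⨆ i, ‖D i‖)) := by
      have := hcup.mul_const (⨆ i, ‖D i‖)
      rw [one_mul] at this
      exact this
    have hgt' : ∀ t : ℕ, (⨆ i, ‖D i‖) ≤ ⨆ i, gramBound (D i) t := by
      intro t
      have := hge t
      rwa [hspec] at this
    rw [hspec]
    exact tendsto_of_tendsto_of_tendsto_of_le_of_le tendsto_const_nhds hupper hgt' hle
end
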